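/- arXiv:1901.10717 — 2 statements merged into one kernel-verified Lean document; each statement's English description precedes it below -/
import Mathlib

section
/- Let C be a well-powered category with wide pullbacks and let F : C ⥤ C preserve monomorphisms. Then F preserves intersections (the induced maps on subobject lattices preserve arbitrary infima) if and only if F has least bounds, i.e., for every morphism f : X ⟶ F.obj Y there exists a least subobject m of Y such that f factors through F.map m.arrow. -/
/-!
Both conditions say that every `subMap hF : Subobject Y → Subobject (F.obj Y)` has a left
adjoint. For preservation of infima this is the order-theoretic adjoint functor theorem. For
least bounds, let `I f` be the intersection of all subobjects through which `f` factors; `f`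
still factors through it, so `f` factors through `subMap hF n` iff `I f ≤ subMap hF n`.
Since `I P.arrow = P` for every subobject `P`, least bounds for all `f` amount to a least `n`
with `P ≤ subMap hF n` for every `P`.
-/

open CategoryTheory CategoryTheory.Limits

universe w v u

variable {C : Type u} [Category.{v} C]

/-- A functor preserves monomorphisms. -/
def PreservesMonos (F : C ⥤ C) : Prop :=
  ∀ ⦃X Y : C⦄ (f : X ⟶ Y), Mono f → Mono (F.map f)

/-- The induced map on subobject lattices of a mono-preserving functor. -/
noncomputable def subMap {F : C ⥤ C} (hF : PreservesMonos F) {Y : C} (m : Subobject Y) :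
    Subobject (F.obj Y) :=
  letI : Mono (F.map m.arrow) := hF m.arrow inferInstance
  Subobject.mk (F.map m.arrow)

/-- A mono-preserving functor preserves intersections if the induced maps on subobject
lattices preserve arbitrary infima. -/
def PreservesIntersections [WellPowered.{v} C] [HasWidePullbacks.{v} C] {F : C ⥤ C}
    (hF : PreservesMonos F) : Prop :=
  ∀ ⦃Y : C⦄ (s : Set (Subobject Y)), subMap hF (sInf s) = sInf (subMap hF '' s)

/-- The "next time" operator of a morphism `f : X ⟶ F.obj Y`. -/
noncomputable def nextTime [HasPullbacks C] {F : C ⥤ C} (hF : PreservesMonos F)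
    {X Y : C} (f : X ⟶ F.obj Y) (n : Subobject Y) : Subobject X :=
  (Subobject.pullback f).obj (subMap hF n)

/-- The "previous time" operator of a morphism `f : X ⟶ F.obj Y`: it sends a subobject `m` of
`X` to the least subobject `n` of `Y` such that `m.arrow ≫ f` factors through `F.map n.arrow`. -/
noncomputable def prevTime [WellPowered.{v} C] [HasWidePullbacks.{v} C] (F : C ⥤ C)
    {X Y : C} (f : X ⟶ F.obj Y) (m : Subobject X) : Subobject Y :=
  sInf {n : Subobject Y | ∃ g : (m : C) ⟶ F.obj (n : C), g ≫ F.map n.arrow = m.arrow ≫ f}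

/-- An `I`-pointed coalgebra `(X, c, i)` is reachable if every monomorphic homomorphism of
`I`-pointed coalgebras into it is an isomorphism. -/
def Reachable (F : C ⥤ C) {I X : C} (c : X ⟶ F.obj X) (i : I ⟶ X) : Prop :=
  ∀ ⦃S : C⦄ (s : S ⟶ F.obj S) (iS : I ⟶ S) (m : S ⟶ X),
    Mono m → s ≫ F.map m = m ≫ c → iS ≫ m = i → IsIso m

section OrderTheory

variable {α β : Type*} [CompleteSemilatticeInf α] [CompleteSemilatticeInf β]

/-- The order-theoretic adjoint functor theorem: the least `a` is the value at `b` of a left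
adjoint of `φ`. -/
theorem map_sInf_eq_sInf_image_iff_forall_exists_isLeast {φ : α → β} (hφ : Monotone φ) :
    (∀ s : Set α, φ (sInf s) = sInf (φ '' s)) ↔
      ∀ b : β, ∃ a, IsLeast {a | b ≤ φ a} a := by
  constructor
  · intro h b
    refine ⟨sInf {a | b ≤ φ a}, ?_, fun a ha => sInf_le ha⟩
    change b ≤ φ _
    rw [h]
    exact le_sInf (Set.forall_mem_image.2 fun _ ha => ha)
  · intro h s
    refine le_antisymm (le_sInf (Set.forall_mem_image.2 fun _ ha => hφ (sInf_le ha))) ?_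
    obtain ⟨a, ha, ha_least⟩ := h (sInf (φ '' s))
    have ha_le : a ≤ sInf s :=
      le_sInf fun n hn => ha_least (sInf_le (Set.mem_image_of_mem φ hn))
    exact ha.trans (hφ ha_le)

end OrderTheory

namespace CategoryTheory.Subobject

variable [WellPowered.{v} C] [HasWidePullbacks.{v} C]

/- Inside this namespace `sInf` names the construction `Subobject.sInf`, hence `InfSet.sInf`;
its lemmas need their universe pinned, which typeclass search cannot infer. -/

theorem factors_sInf_iff {X A : C} (s : Set (Subobject A)) (f : X ⟶ A) :
    (InfSet.sInf s).Factors f ↔ ∀ P ∈ s, P.Factors f := by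
  refine ⟨fun h P hP => factors_of_le f (sInf_le.{v} s P hP) h, fun h => ?_⟩
  have mem : ∀ j : equivShrink.{v} (Subobject A) '' s,
      (equivShrink.{v} (Subobject A)).symm j ∈ s :=
    fun j => (symm_apply_mem_iff_mem_image _ _ _).2 j.2
  let c : Cone (wideCospan.{v} s) :=
    WidePullbackShape.mkCone f (fun j => factorThru _ f (h _ (mem j)))
      (fun j => factorThru_arrow _ f _)
  change (Subobject.mk (widePullbackι.{v} s)).Factors f
  exact ⟨limit.lift _ c, limit.lift_π c none⟩

/-- An image of `f`, built from wide pullbacks alone. -/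
noncomputable def sInfFactors {X A : C} (f : X ⟶ A) : Subobject A :=
  InfSet.sInf {P | P.Factors f}

theorem factors_iff_sInfFactors_le {X A : C} (P : Subobject A) (f : X ⟶ A) :
    P.Factors f ↔ sInfFactors f ≤ P :=
  ⟨fun h => sInf_le.{v} _ P h,
    fun h => factors_of_le f h ((factors_sInf_iff _ f).2 fun _ hQ => hQ)⟩

theorem sInfFactors_arrow {A : C} (P : Subobject A) : sInfFactors P.arrow = P :=
  le_antisymm ((factors_iff_sInfFactors_le P _).1 P.factors_self) (le_of_factors
    ((factors_iff_sInfFactors_le _ _).2 le_rfl))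

end CategoryTheory.Subobject

open Subobject

theorem subMap_monotone {F : C ⥤ C} (hF : PreservesMonos F) {Y : C} :
    Monotone (subMap hF (Y := Y)) := fun m n h => by
  have := hF m.arrow inferInstance
  have := hF n.arrow inferInstance
  exact mk_le_mk_of_comm (F.map (ofLE m n h)) (by rw [← F.map_comp, ofLE_arrow])

/-- **Gumm's characterization:** a mono-preserving functor preserves intersections iff it has
least bounds, i.e.\ for every `f : X ⟶ F.obj Y` there is a least subobject `m` of `Y` such
that `f` factors through `F.map m.arrow`. -/
theorem preservesIntersections_iff_hasLeastBounds
    [WellPowered.{v} C] [HasWidePullbacks.{v} C]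
    (F : C ⥤ C) (hF : PreservesMonos F) :
    PreservesIntersections hF ↔
      ∀ ⦃X Y : C⦄ (f : X ⟶ F.obj Y),
        ∃ m : Subobject Y,
          IsLeast {n : Subobject Y | ∃ g : X ⟶ F.obj (n : C), g ≫ F.map n.arrow = f} m := by
  have hset : ∀ {X Y : C} (f : X ⟶ F.obj Y),
      {n : Subobject Y | ∃ g : X ⟶ F.obj (n : C), g ≫ F.map n.arrow = f} =
        {n | sInfFactors f ≤ subMap hF n} := fun f =>
    Set.ext fun n => factors_iff_sInfFactors_le (subMap hF n) f
  simp only [hset]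
  -- Typeclass search cannot infer the universe of this instance.
  let (Y : C) : CompleteSemilatticeInf (Subobject Y) := completeSemilatticeInf.{v}
  refine (forall_congr' fun Y =>
    map_sInf_eq_sInf_image_iff_forall_exists_isLeast (subMap_monotone hF (Y := Y))).trans ?_
  exact ⟨fun h X Y f => h Y (sInfFactors f),
    fun h Y b => by simpa only [sInfFactors_arrow] using h b.arrow⟩
end

section
/- Let C be a well-powered category with wide pullbacks and let F : C ⥤ C preserve monomorphisms and intersections. Then any two reachable pointed subcoalgebras of an I-pointed F-coalgebra (C, c, i_C) coincide: if m₁ : (S₁, s₁, i₁) ↪ (C, c, i_C) and m₂ : (S₂, s₂, i₂) ↪ (C, c, i_C) are monomorphic homomorphisms of I-pointed coalgebras with both (S₁, s₁, i₁) and (S₂, s₂, i₂) reachable, then m₁ and m₂ represent the same subobject of C (there is an isomorphism j : S₁ ≅ S₂ with j.hom ≫ m₂ = m₁). -/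
open CategoryTheory CategoryTheory.Limits

universe w v u

variable {C : Type u} [Category.{v} C]

/-!
The intersection of two pointed subcoalgebras is again a pointed subcoalgebra, because `F`
preserves binary intersections. It embeds into each of them by a monomorphic homomorphism of
pointed coalgebras, which reachability forces to be an isomorphism; so both subcoalgebras coincide
with the intersection.
-/

section Subcoalgebra

variable {F : C ⥤ C}

theorem subMap_factors_iff (hF : PreservesMonos F) {Y Z : C} (P : Subobject Y)
    (g : Z ⟶ F.obj Y) :
    (subMap hF P).Factors g ↔ ∃ h : Z ⟶ F.obj P, h ≫ F.map P.arrow = g :=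
  letI : Mono (F.map P.arrow) := hF _ inferInstance
  Subobject.mk_factors_iff _ g

theorem subMap_inf [WellPowered.{v} C] [HasWidePullbacks.{v} C] {hF : PreservesMonos F}
    (hInt : PreservesIntersections hF) {Y : C} (P Q : Subobject Y) :
    subMap hF (P ⊓ Q) = subMap hF P ⊓ subMap hF Q := by
  have sInf_pair {Z : C} (A B : Subobject Z) : sInf {A, B} = A ⊓ B :=
    le_antisymm (le_inf (Subobject.sInf_le.{v} _ _ (by simp)) (Subobject.sInf_le.{v} _ _ (by simp)))
      (Subobject.le_sInf.{v} _ _ (by rintro R (rfl | rfl); exacts [inf_le_left, inf_le_right]))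
  simpa only [Set.image_pair, sInf_pair] using hInt {P, Q}

variable (F) in
def IsSubcoalgebra {X : C} (c : X ⟶ F.obj X) (P : Subobject X) : Prop :=
  ∃ t : (P : C) ⟶ F.obj P, t ≫ F.map P.arrow = P.arrow ≫ c

theorem isSubcoalgebra_mk {X S : C} {c : X ⟶ F.obj X} {s : S ⟶ F.obj S} (m : S ⟶ X) [Mono m]
    (hm : s ≫ F.map m = m ≫ c) : IsSubcoalgebra F c (Subobject.mk m) :=
  ⟨(Subobject.underlyingIso m).hom ≫ s ≫ F.map (Subobject.underlyingIso m).inv, by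
    simp [← F.map_comp, hm]⟩

theorem IsSubcoalgebra.factors_of_le {hF : PreservesMonos F} {X : C} {c : X ⟶ F.obj X}
    {P Q : Subobject X} (hP : IsSubcoalgebra F c P) (hQP : Q ≤ P) :
    (subMap hF P).Factors (Q.arrow ≫ c) := by
  obtain ⟨t, ht⟩ := hP
  exact (subMap_factors_iff hF P _).2 ⟨Subobject.ofLE Q P hQP ≫ t, by simp [ht]⟩

theorem IsSubcoalgebra.inf [WellPowered.{v} C] [HasWidePullbacks.{v} C]
    {hF : PreservesMonos F} (hInt : PreservesIntersections hF) {X : C} {c : X ⟶ F.obj X}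
    {P Q : Subobject X} (hP : IsSubcoalgebra F c P) (hQ : IsSubcoalgebra F c Q) :
    IsSubcoalgebra F c (P ⊓ Q) := by
  have hfac : (subMap hF (P ⊓ Q)).Factors ((P ⊓ Q).arrow ≫ c) := by
    rw [subMap_inf hInt, Subobject.inf_factors]
    exact ⟨hP.factors_of_le inf_le_left, hQ.factors_of_le inf_le_right⟩
  exact (subMap_factors_iff hF _ _).1 hfac

theorem comp_map_eq_of_fac (hF : PreservesMonos F) {S T X : C} {c : X ⟶ F.obj X}
    {s : S ⟶ F.obj S} {t : T ⟶ F.obj T} {m : S ⟶ X} [Mono m] {n : T ⟶ X} {q : T ⟶ S}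
    (hq : q ≫ m = n) (hm : s ≫ F.map m = m ≫ c) (hn : t ≫ F.map n = n ≫ c) :
    t ≫ F.map q = q ≫ s := by
  have : Mono (F.map m) := hF m inferInstance
  rw [← cancel_mono (F.map m), Category.assoc, ← F.map_comp, hq, hn, Category.assoc, hm,
    ← Category.assoc, hq]

theorem Reachable.eq_mk_of_le (hF : PreservesMonos F) {I X S : C} {c : X ⟶ F.obj X}
    {s : S ⟶ F.obj S} {i : I ⟶ S} (hreach : Reachable F s i) {m : S ⟶ X} [Mono m]
    (hm : s ≫ F.map m = m ≫ c) {P : Subobject X} (hP : IsSubcoalgebra F c P)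
    (hPi : P.Factors (i ≫ m)) (hle : P ≤ Subobject.mk m) : P = Subobject.mk m := by
  obtain ⟨t, ht⟩ := hP
  let q : (P : C) ⟶ S := Subobject.ofLE P _ hle ≫ (Subobject.underlyingIso m).hom
  have hq : q ≫ m = P.arrow := by simp [q]
  have : Mono q := mono_of_mono_fac hq
  have hqi : P.factorThru _ hPi ≫ q = i := by
    rw [← cancel_mono m, Category.assoc, hq, Subobject.factorThru_arrow]
  have : IsIso q := hreach t _ q inferInstance (comp_map_eq_of_fac hF hq hm ht) hqi
  exact le_antisymm hle (Subobject.mk_le_of_comm (inv q) (by simp [← hq]))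

end Subcoalgebra

/-- **Uniqueness of the reachable part:** any two reachable pointed subcoalgebras of an
`I`-pointed `F`-coalgebra `(X, c, i_C)` represent the same subobject of `X`. -/
theorem reachable_subcoalgebra_unique
    [WellPowered.{v} C] [HasWidePullbacks.{v} C]
    (F : C ⥤ C) (hF : PreservesMonos F) (hInt : PreservesIntersections hF)
    {I X S₁ S₂ : C} (c : X ⟶ F.obj X) (i_C : I ⟶ X)
    (s₁ : S₁ ⟶ F.obj S₁) (i₁ : I ⟶ S₁) (m₁ : S₁ ⟶ X) (hm₁ : Mono m₁)
    (hm₁_coalg : s₁ ≫ F.map m₁ = m₁ ≫ c) (hm₁_pt : i₁ ≫ m₁ = i_C)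
    (h₁_reach : Reachable F s₁ i₁)
    (s₂ : S₂ ⟶ F.obj S₂) (i₂ : I ⟶ S₂) (m₂ : S₂ ⟶ X) (hm₂ : Mono m₂)
    (hm₂_coalg : s₂ ≫ F.map m₂ = m₂ ≫ c) (hm₂_pt : i₂ ≫ m₂ = i_C)
    (h₂_reach : Reachable F s₂ i₂) :
    ∃ j : S₁ ≅ S₂, j.hom ≫ m₂ = m₁ := by
  set P := Subobject.mk m₁ ⊓ Subobject.mk m₂
  have hP : IsSubcoalgebra F c P :=
    (isSubcoalgebra_mk m₁ hm₁_coalg).inf hInt (isSubcoalgebra_mk m₂ hm₂_coalg)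
  have hPi : P.Factors i_C := (Subobject.inf_factors _).2
    ⟨(Subobject.mk_factors_iff _ _).2 ⟨i₁, hm₁_pt⟩, (Subobject.mk_factors_iff _ _).2 ⟨i₂, hm₂_pt⟩⟩
  have h₁ : P = Subobject.mk m₁ :=
    h₁_reach.eq_mk_of_le hF hm₁_coalg hP (hm₁_pt ▸ hPi) inf_le_left
  have h₂ : P = Subobject.mk m₂ :=
    h₂_reach.eq_mk_of_le hF hm₂_coalg hP (hm₂_pt ▸ hPi) inf_le_right
  exact ⟨Subobject.isoOfMkEqMk m₁ m₂ (h₁.symm.trans h₂), Subobject.ofMkLEMk_comp _⟩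
end
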